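/- arXiv:1909.13195 — 2 statements merged into one kernel-verified Lean document; each statement's English description precedes it below -/
import Mathlib

section
/- Consider the rotor walk with initial location a, sink Z, and initial rotor configuration ρ. For every time t ≥ 0 such that the walk has not terminated before time t (so that X_0, …, X_t are defined) and every i with 0 ≤ i ≤ t, there exists an oriented path in the rotor configuration ρ_t that starts at X_i and ends at X_t. -/
open Classical

universe u

variable {V : Type u}

/-- A rotor mechanism: for each vertex `x`, `τ x` restricts to a bijection of the
neighbor set of `x` having a single orbit. -/
def IsMechanism (G : SimpleGraph V) (τ : V → V → V) : Prop :=
  ∀ x : V, Set.BijOn (τ x) (G.neighborSet x) (G.neighborSet x) ∧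
    ∀ y ∈ G.neighborSet x, ∀ z ∈ G.neighborSet x, ∃ i : ℕ, (τ x)^[i] y = z

/-- One step of the rotor walk with sink `Z`; the walk freezes once it reaches `Z`. -/
noncomputable def rotorStep [DecidableEq V] (τ : V → V → V) (Z : Set V) :
    V × (V → V) → V × (V → V) := fun p =>
  if p.1 ∈ Z then p
  else (τ p.1 (p.2 p.1), Function.update p.2 p.1 (τ p.1 (p.2 p.1)))

/-- The rotor walk with initial location `a`, sink `Z` and initial rotor
configuration `ρ`: position (first component) and rotor configuration
(second component) at time `t`. -/
noncomputable def rotorWalk [DecidableEq V] (τ : V → V → V) (Z : Set V)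
    (a : V) (ρ : V → V) (t : ℕ) : V × (V → V) :=
  (rotorStep τ Z)^[t] (a, ρ)

/-- `Z`-oriented spanning forests of `G`, viewed as rotor configurations,
normalized to be the identity on `Z` (the values on `Z` are inconsequential). -/
def SFset (G : SimpleGraph V) (Z : Set V) : Set (V → V) :=
  {ρ | (∀ x ∉ Z, G.Adj x (ρ x)) ∧ (∀ x : V, ∃ ℓ : ℕ, ρ^[ℓ] x ∈ Z) ∧ ∀ x ∈ Z, ρ x = x}

/-- The eventual value of an eventually-constant sequence. -/
noncomputable def eventualVal (f : ℕ → V) : V :=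
  if h : ∃ t : ℕ, ∀ s : ℕ, t ≤ s → f s = f t then f h.choose else f 0

/-- The final rotor configuration `σ(a, Z; ρ)` of the rotor walk. -/
noncomputable def finalConfig [DecidableEq V] (τ : V → V → V) (Z : Set V)
    (a : V) (ρ : V → V) : V → V :=
  fun x => eventualVal fun t => (rotorWalk τ Z a ρ t).2 x

/-- `ξ_i(a_0, …, a_{i-1}, Z; ρ)`: the rotor configuration after `i` successive
walkers, started at `a_0, …, a_{i-1}`, have performed rotor walks with sink `Z`. -/
noncomputable def xiConfig [DecidableEq V] (τ : V → V → V) (Z : Set V) (av : ℕ → V) :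
    ℕ → (V → V) → (V → V)
  | 0, ρ => ρ
  | i + 1, ρ => finalConfig τ Z (av i) (xiConfig τ Z av i ρ)

/-- The set of times at which the rotor walk (run until it first reaches the
sink `Z`) is at a vertex of `W`; its cardinality is the odometer `u(a,Z;ρ)(W)`. -/
def visitTimes [DecidableEq V] (τ : V → V → V) (Z : Set V) (a : V) (ρ : V → V)
    (W : Set V) : Set ℕ :=
  {t | (rotorWalk τ Z a ρ t).1 ∈ W ∧ ∀ s < t, (rotorWalk τ Z a ρ s).1 ∉ Z}

/-- The event `E_{r,W}(a,Z)`: the rotor walk with initial location `a` and sink `Z`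
visits `W` some time after visiting a vertex at graph distance at least `r` from `W`. -/
def Eset [DecidableEq V] (G : SimpleGraph V) (τ : V → V → V) (r : ℕ) (W : Set V)
    (a : V) (Z : Set V) : Set (V → V) :=
  {ρ | ∃ t₁ t₂ : ℕ, t₁ < t₂ ∧ (∀ s < t₂, (rotorWalk τ Z a ρ s).1 ∉ Z) ∧
    (∀ w ∈ W, r ≤ G.dist w (rotorWalk τ Z a ρ t₁).1) ∧ (rotorWalk τ Z a ρ t₂).1 ∈ W}

/-- The event `D_r` (relative to the set `Z`): there is an oriented path in `ρ`
from a vertex at graph distance exactly `r` from `Z` to a vertex of `Z`. -/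
def Dset (G : SimpleGraph V) (Z : Set V) (r : ℕ) : Set (V → V) :=
  {ρ | ∃ x : V, ∃ ℓ : ℕ, (∀ w ∈ Z, r ≤ G.dist w x) ∧ (∃ w ∈ Z, G.dist w x = r) ∧
    ρ^[ℓ] x ∈ Z}

/-- The transition matrix `P_Z` of simple random walk on `G` killed upon hitting `Z`. -/
noncomputable def killedP (G : SimpleGraph V) [∀ v : V, Fintype (G.neighborSet v)]
    (Z : Set V) : Matrix {x : V // x ∉ Z} {x : V // x ∉ Z} ℝ :=
  fun x y => if G.Adj x.1 y.1 then (1 : ℝ) / (G.degree x.1) else 0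

/-- The Green function `((I - P_Z)⁻¹)_{a,x}` of simple random walk killed at `Z`,
as a function of a pair of vertices (zero if `V ∖ Z` is infinite or `a ∈ Z` or `x ∈ Z`). -/
noncomputable def greenFn (G : SimpleGraph V) [DecidableEq V]
    [∀ v : V, Fintype (G.neighborSet v)] (Z : Set V) (a x : V) : ℝ :=
  if h : ({y : V | y ∉ Z}).Finite ∧ a ∉ Z ∧ x ∉ Z then
    letI : Fintype {y : V // y ∉ Z} := h.1.fintype
    ((1 - killedP G Z)⁻¹) ⟨a, h.2.1⟩ ⟨x, h.2.2⟩
  else 0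

/-! Induction on `t`. The step from `t` to `t + 1` only redirects the rotor at `X_t` to `X_{t+1}`,
and redirecting the pointer at `y` to `z` keeps `z` reachable from every vertex from which `y`
was reachable: follow the old rotors up to the first visit of `y`, then the new one. -/

theorem Function.exists_iterate_update_eq {α : Type*} [DecidableEq α] {f : α → α} {x y : α}
    (z : α) {n : ℕ} (hn : f^[n] x = y) : ∃ m, (Function.update f y z)^[m] x = z := by
  induction n generalizing x with
  | zero => exact ⟨1, by simp [← hn]⟩
  | succ n ih =>
    by_cases hxy : x = y
    · exact ⟨1, by simp [hxy]⟩
    · obtain ⟨m, hm⟩ := ih (x := f x) hn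
      exact ⟨m + 1, by rw [Function.iterate_succ_apply, Function.update_of_ne hxy, hm]⟩

theorem rotorWalk_succ_of_notMem {V : Type u} [DecidableEq V] (τ : V → V → V) (Z : Set V)
    (a : V) (ρ : V → V) {t : ℕ} (ht : (rotorWalk τ Z a ρ t).1 ∉ Z) :
    rotorWalk τ Z a ρ (t + 1) =
      let (x, σ) := rotorWalk τ Z a ρ t
      (τ x (σ x), Function.update σ x (τ x (σ x))) := by
  rw [rotorWalk, Function.iterate_succ_apply', ← rotorWalk, rotorStep, if_neg ht]

/-- For every time `t` such that the walk has not terminated before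
time `t`, and every `i ≤ t`, there is an oriented path in `ρ_t` from `X_i` to `X_t`. -/
theorem stmt0 {V : Type u} [DecidableEq V] (G : SimpleGraph V) (hconn : G.Connected)
    [∀ v : V, Fintype (G.neighborSet v)] (τ : V → V → V) (hτ : IsMechanism G τ)
    (Z : Set V) (a : V) (ρ : V → V) (hρ : ∀ x : V, G.Adj x (ρ x))
    (t : ℕ) (hactive : ∀ s < t, (rotorWalk τ Z a ρ s).1 ∉ Z)
    (i : ℕ) (hi : i ≤ t) :
    ∃ ℓ : ℕ, ((rotorWalk τ Z a ρ t).2)^[ℓ] ((rotorWalk τ Z a ρ i).1)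
      = (rotorWalk τ Z a ρ t).1 := by
  induction t with
  | zero => exact ⟨0, by rw [Nat.le_zero.mp hi]; rfl⟩
  | succ t ih =>
    rcases Nat.le_succ_iff.mp hi with hit | rfl
    · obtain ⟨ℓ, hℓ⟩ := ih (fun s hs => hactive s (hs.trans t.lt_succ_self)) hit
      rw [rotorWalk_succ_of_notMem τ Z a ρ (hactive t t.lt_succ_self)]
      exact Function.exists_iterate_update_eq _ hℓ
    · exact ⟨0, rfl⟩
end

section
/- Consider the rotor walk with initial location a, sink Z, and initial rotor configuration ρ. For every time t ≥ 1 such that the walk has not terminated before time t and every i with 0 ≤ i < t, the rotor ρ_t(X_i) belongs to the set {X_{i+1}, X_{i+2}, …, X_t}. -/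
/-! If `s < t` is the last visit to `X_i` before time `t`, then the rotor at `X_i` was last
turned at time `s`, when it was set to `X_{s+1}`; hence `ρ_t(X_i) = X_{s+1}`. -/

open Classical

universe u

variable {V : Type u}

section RotorStep

variable [DecidableEq V] (τ : V → V → V) (Z : Set V)

theorem rotorWalk_succ (a : V) (ρ : V → V) (t : ℕ) :
    rotorWalk τ Z a ρ (t + 1) = rotorStep τ Z (rotorWalk τ Z a ρ t) :=
  Function.iterate_succ_apply' _ _ _

variable {τ Z} {p : V × (V → V)}

theorem rotorStep_snd_self (hp : p.1 ∉ Z) : (rotorStep τ Z p).2 p.1 = (rotorStep τ Z p).1 := by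
  simp [rotorStep, hp]

theorem rotorStep_snd_of_ne (hp : p.1 ∉ Z) {x : V} (hx : x ≠ p.1) :
    (rotorStep τ Z p).2 x = p.2 x := by
  simp [rotorStep, hp, Function.update_of_ne hx]

end RotorStep

/-- For every time `t ≥ 1` such that the walk has not terminated before
time `t`, and every `i < t`, the rotor `ρ_t (X_i)` lies in `{X_{i+1}, …, X_t}`. -/
theorem stmt1 {V : Type u} [DecidableEq V] (G : SimpleGraph V) (hconn : G.Connected)
    [∀ v : V, Fintype (G.neighborSet v)] (τ : V → V → V) (hτ : IsMechanism G τ)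
    (Z : Set V) (a : V) (ρ : V → V) (hρ : ∀ x : V, G.Adj x (ρ x))
    (t : ℕ) (ht : 1 ≤ t) (hactive : ∀ s < t, (rotorWalk τ Z a ρ s).1 ∉ Z)
    (i : ℕ) (hi : i < t) :
    ∃ j : ℕ, i + 1 ≤ j ∧ j ≤ t ∧
      (rotorWalk τ Z a ρ t).2 ((rotorWalk τ Z a ρ i).1) = (rotorWalk τ Z a ρ j).1 := by
  clear ht
  induction t with
  | zero => omega
  | succ n ih =>
    have hn : (rotorWalk τ Z a ρ n).1 ∉ Z := hactive n n.lt_succ_self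
    rw [rotorWalk_succ]
    by_cases hvisit : (rotorWalk τ Z a ρ i).1 = (rotorWalk τ Z a ρ n).1
    · refine ⟨n + 1, by omega, le_rfl, ?_⟩
      rw [hvisit, rotorStep_snd_self hn, ← rotorWalk_succ]
    · have hin : i ≠ n := by rintro rfl; exact hvisit rfl
      obtain ⟨j, hij, hjn, hj⟩ := ih (fun s hs => hactive s (by omega)) (by omega)
      exact ⟨j, hij, by omega, by rw [rotorStep_snd_of_ne hn hvisit, hj]⟩
end
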